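/- For every odd integer i ≥ 5, the circulant graph B_i with jumps 1 and (i-1)/2 is 4-edge-connected. -/

import Mathlib

/-! A proper nonempty subset `A` of a group generated (as a monoid) by `d` cannot be closed
under `x ↦ x + d`, so some edge of jump `d` leaves `A`; applied to `Aᶜ`, some edge of jump `d`
enters `A`, i.e. leaves it with difference `-d`. The jumps of `B_i` are the units `1` and
`k = (i - 1) / 2` of `ZMod i`, with `2 * k = -1`; for `i ≥ 5` the differences `1, k, -1, -k` are
distinct, so the four edges found this way are distinct. -/

/-- The circulant graph `B_i` on vertices `ZMod i` with jumps `1` and `(i-1)/2`. -/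
def Bcirc (i : ℕ) : SimpleGraph (ZMod i) :=
  SimpleGraph.fromRel (fun a b => b = a + 1 ∨ b = a + (((i - 1) / 2 : ℕ) : ZMod i))

open scoped Pointwise

theorem exists_mem_add_notMem_of_forall_nsmul {G : Type*} [AddGroup G] {A : Set G}
    (hA : A.Nonempty) (hAc : Aᶜ.Nonempty) {d : G} (hd : ∀ g, ∃ m : ℕ, m • d = g) :
    ∃ x ∈ A, x + d ∉ A := by
  by_contra! hclosed
  obtain ⟨a, ha⟩ := hA
  obtain ⟨b, hb⟩ := hAc
  have hmem : ∀ m : ℕ, a + m • d ∈ A := by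
    intro m
    induction m with
    | zero => simpa using ha
    | succ m ih => simpa [succ_nsmul, add_assoc] using hclosed _ ih
  obtain ⟨m, hm⟩ := hd (-a + b)
  exact hb (by simpa [hm] using hmem m)

theorem SimpleGraph.ncard_union_neg_le_ncard_crossing {G : Type*} [AddCommGroup G] [Finite G]
    (Γ : SimpleGraph G) {A : Set G} (hA : A.Nonempty) (hAc : Aᶜ.Nonempty) {D : Set G}
    (hD : ∀ d ∈ D, (∀ g, ∃ m : ℕ, m • d = g) ∧ ∀ x, Γ.Adj x (x + d)) :
    (D ∪ -D).ncard ≤ {q : G × G | q.1 ∈ A ∧ q.2 ∉ A ∧ Γ.Adj q.1 q.2}.ncard := by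
  set S := {q : G × G | q.1 ∈ A ∧ q.2 ∉ A ∧ Γ.Adj q.1 q.2}
  have hsub : D ∪ -D ⊆ (fun q : G × G => q.2 - q.1) '' S := by
    rintro e (he | he)
    · obtain ⟨hgen, hadj⟩ := hD e he
      obtain ⟨x, hx, hxe⟩ := exists_mem_add_notMem_of_forall_nsmul hA hAc hgen
      exact ⟨(x, x + e), ⟨hx, hxe, hadj x⟩, by simp⟩
    · obtain ⟨hgen, hadj⟩ := hD (-e) he
      obtain ⟨y, hy, hye⟩ := exists_mem_add_notMem_of_forall_nsmul hAc (by simpa using hA) hgen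
      exact ⟨(y + -e, y), ⟨by simpa using hye, hy, (hadj y).symm⟩, by simp⟩
  calc (D ∪ -D).ncard ≤ ((fun q : G × G => q.2 - q.1) '' S).ncard :=
        Set.ncard_le_ncard hsub (Set.toFinite _)
    _ ≤ S.ncard := Set.ncard_image_le (Set.toFinite _)

theorem ZMod.exists_nsmul_eq_of_isUnit {n : ℕ} [NeZero n] {d : ZMod n} (hd : IsUnit d)
    (g : ZMod n) : ∃ m : ℕ, m • d = g :=
  ⟨(g * ↑hd.unit⁻¹).val, by simp [nsmul_eq_mul, mul_assoc]⟩

theorem ncard_pm_one_pm_of_two_mul_eq_neg_one {R : Type*} [CommRing R] {k : R}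
    (hk : 2 * k = -1) (h2 : (2 : R) ≠ 0) (h3 : (3 : R) ≠ 0) :
    ({1, k, -1, -k} : Set R).ncard = 4 := by
  have h1 : (1 : R) ≠ 0 := fun h => h2 (by linear_combination 2 * h)
  have h1k : (1 : R) ≠ k := fun h => h3 (by linear_combination hk + 2 * h)
  have h1k' : (1 : R) ≠ -k := fun h => h1 (by linear_combination 2 * h - hk)
  have h1n : (1 : R) ≠ -1 := fun h => h2 (by linear_combination h)
  have hkk : k ≠ -k := fun h => h1 (by linear_combination hk - h)
  have hk1 : k ≠ -1 := fun h => h1k' (by linear_combination h)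
  have hnn : -1 ≠ -k := fun h => h1k (by linear_combination -h)
  rw [Set.ncard_insert_of_notMem (by simp [h1k, h1k', h1n]),
    Set.ncard_insert_of_notMem (by simp [hk1, hkk]), Set.ncard_pair hnn]

theorem Bcirc_adj_add {i : ℕ} {d : ZMod i}
    (hd : d ∈ ({1, (((i - 1) / 2 : ℕ) : ZMod i)} : Set (ZMod i))) (h0 : d ≠ 0) (x : ZMod i) :
    (Bcirc i).Adj x (x + d) := by
  simp only [Set.mem_insert_iff, Set.mem_singleton_iff] at hd
  simp [Bcirc, SimpleGraph.fromRel_adj, h0, hd]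

theorem two_mul_natCast_half_pred {i : ℕ} (hodd : Odd i) :
    (2 : ZMod i) * ((i - 1) / 2 : ℕ) = -1 := by
  obtain ⟨m, rfl⟩ := hodd
  have : (2 * m + 1 - 1) / 2 = m := by omega
  rw [this]
  have : ((2 * m + 1 : ℕ) : ZMod (2 * m + 1)) = 0 := ZMod.natCast_self _
  push_cast at this
  linear_combination this

/-- For every odd `i ≥ 5`, the circulant graph `B_i` with jumps `1` and
`(i-1)/2` is `4`-edge-connected: every edge cut separating two vertices (here
counted as ordered adjacent pairs from `A` to its complement) has at least `4`
edges. -/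
theorem stmt_14 (i : ℕ) [NeZero i] (h5 : 5 ≤ i) (hodd : Odd i)
    (A : Set (ZMod i)) (hA : A.Nonempty) (hAc : Aᶜ.Nonempty) :
    4 ≤ {q : ZMod i × ZMod i | q.1 ∈ A ∧ q.2 ∉ A ∧ (Bcirc i).Adj q.1 q.2}.ncard := by
  have : Fact (1 < i) := ⟨by omega⟩
  have hsmall : ∀ n : ℕ, 0 < n → n < i → (n : ZMod i) ≠ 0 := fun n hn hni h =>
    Nat.not_dvd_of_pos_of_lt hn hni ((ZMod.natCast_eq_zero_iff n i).mp h)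
  set k : ZMod i := (((i - 1) / 2 : ℕ) : ZMod i)
  have hk : 2 * k = -1 := two_mul_natCast_half_pred hodd
  have hk_unit : IsUnit k := IsUnit.of_mul_eq_one (-2) (by linear_combination -hk)
  have hD : ∀ d ∈ ({1, k} : Set (ZMod i)),
      (∀ g, ∃ m : ℕ, m • d = g) ∧ ∀ x, (Bcirc i).Adj x (x + d) := by
    intro d hd
    have hd_unit : IsUnit d := by rcases hd with rfl | rfl; exacts [isUnit_one, hk_unit]
    exact ⟨ZMod.exists_nsmul_eq_of_isUnit hd_unit, Bcirc_adj_add hd hd_unit.ne_zero⟩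
  calc 4 = ({1, k, -1, -k} : Set (ZMod i)).ncard :=
        (ncard_pm_one_pm_of_two_mul_eq_neg_one hk
          (by exact_mod_cast hsmall 2 (by omega) (by omega))
          (by exact_mod_cast hsmall 3 (by omega) (by omega))).symm
    _ = (({1, k} : Set (ZMod i)) ∪ -{1, k}).ncard := by
        congr 1; ext
        simp only [Set.mem_union, Set.mem_neg, Set.mem_insert_iff, Set.mem_singleton_iff,
          neg_eq_iff_eq_neg]
        tauto
    _ ≤ _ := (Bcirc i).ncard_union_neg_le_ncard_crossing hA hAc hD
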